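/- arXiv:2012.13709 — 2 statements merged into one kernel-verified Lean document; each statement's English description precedes it below -/
import Mathlib

section
/- Let E be the totally antisymmetric third-order tensor on ℝ⁶ determined by E^{123} = 1 and E^{456} = 1, with E^{abc} = 0 unless {a,b,c} = {1,2,3} or {a,b,c} = {4,5,6}. Then there exist a smooth function G : ℝ⁶ → ℝ, indices a,c,d ∈ {1,…,6}, and a point x ∈ ℝ⁶ such that, with 𝒥_G^{ac} := Σ_b E^{abc} ∂_bG, the Jacobi expression Σ_m (𝒥_G^{am} ∂_m𝒥_G^{cd} + 𝒥_G^{cm} ∂_m𝒥_G^{da} + 𝒥_G^{dm} ∂_m𝒥_G^{ac}) is nonzero at x. Consequently, the bracket {F,H}_G := Σ E^{abc} ∂_aF ∂_bG ∂_cH obtained by fixing the middle entry of the direct-sum canonical Nambu bracket is not, in general, a Poisson bracket when n > 3. -/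
/-- Partial derivative in the `i`-th coordinate direction. -/
noncomputable def pd {n : ℕ} (i : Fin n) (f : (Fin n → ℝ) → ℝ) (x : Fin n → ℝ) : ℝ :=
  fderiv ℝ f x (Pi.single i 1)

/-- The block Levi-Civita tensor `E` on `ℝ⁶`: totally antisymmetric, `E^{123} = E^{456} = 1`
(0-based: `E 0 1 2 = E 3 4 5 = 1`), vanishing unless all three indices lie in the same
canonical triplet `{1,2,3}` or `{4,5,6}`.  On each block the polynomial formula gives the
permutation sign (and `0` when two indices coincide). -/
noncomputable def E6 (a b c : Fin 6) : ℝ :=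
  if (a.val < 3 ∧ b.val < 3 ∧ c.val < 3) ∨ (3 ≤ a.val ∧ 3 ≤ b.val ∧ 3 ≤ c.val) then
    (((b.val : ℝ) - (a.val : ℝ)) * ((c.val : ℝ) - (a.val : ℝ))
      * ((c.val : ℝ) - (b.val : ℝ))) / 2
  else 0

/-- The skew matrix field `𝒥_G^{ac} = Σ_b E^{abc} ∂_bG` induced by fixing the middle entry
of the direct-sum canonical Nambu bracket on `ℝ⁶` with a function `G`. -/
noncomputable def JG6 (G : (Fin 6 → ℝ) → ℝ) (x : Fin 6 → ℝ) (a c : Fin 6) : ℝ :=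
  ∑ b, E6 a b c * pd b G x

open ContinuousLinearMap in
lemma hG (x : Fin 6 → ℝ) :
    HasFDerivAt (fun y : Fin 6 → ℝ => y 2 + y 1 * y 5)
      ((proj 2 + (x 1 • proj 5 + x 5 • proj 1)) : (Fin 6 → ℝ) →L[ℝ] ℝ) x :=
  ((proj (R := ℝ) (φ := fun _ : Fin 6 => ℝ) 2).hasFDerivAt).add
    (((proj (R := ℝ) (φ := fun _ : Fin 6 => ℝ) 1).hasFDerivAt).mul
      ((proj (R := ℝ) (φ := fun _ : Fin 6 => ℝ) 5).hasFDerivAt))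

lemma pd_G (b : Fin 6) (x : Fin 6 → ℝ) :
    pd b (fun y => y 2 + y 1 * y 5) x
      = (if (2:Fin 6) = b then 1 else 0)
        + (x 1 * (if (5:Fin 6) = b then 1 else 0) + x 5 * (if (1:Fin 6) = b then 1 else 0)) := by
  rw [pd, (hG x).fderiv]
  simp [Pi.single_apply]

example : True := trivial

lemma hJ34 : (fun y => JG6 (fun z => z 2 + z 1 * z 5) y 3 4) = fun y => -(y 1) := by
  funext y
  simp only [JG6, Fin.sum_univ_six, pd_G, E6]
  norm_num [show ((3:Fin 6):ℕ)=3 from rfl, show ((4:Fin 6):ℕ)=4 from rfl, show ((5:Fin 6):ℕ)=5 from rfl, show ((2:Fin 6)≠5) from by decide, show ((2:Fin 6)≠4) from by decide, show ((2:Fin 6)≠3) from by decide, show ((2:Fin 6)≠1) from by decide, show ((2:Fin 6)≠0) from by decide, show ((1:Fin 6)≠2) from by decide, show ((1:Fin 6)≠3) from by decide, show ((1:Fin 6)≠4) from by decide, show ((1:Fin 6)≠5) from by decide, show ((5:Fin 6)≠0) from by decide, show ((5:Fin 6)≠1) from by decide, show ((5:Fin 6)≠2) from by decide, show ((5:Fin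 6)≠3) from by decide, show ((5:Fin 6)≠4) from by decide]

lemma hJ40 : (fun y => JG6 (fun z => z 2 + z 1 * z 5) y 4 0) = fun _ => 0 := by
  funext y
  simp only [JG6, Fin.sum_univ_six, pd_G, E6]
  norm_num [show ((3:Fin 6):ℕ)=3 from rfl, show ((4:Fin 6):ℕ)=4 from rfl, show ((5:Fin 6):ℕ)=5 from rfl, show ((2:Fin 6)≠5) from by decide, show ((2:Fin 6)≠4) from by decide, show ((2:Fin 6)≠3) from by decide, show ((2:Fin 6)≠1) from by decide, show ((2:Fin 6)≠0) from by decide, show ((1:Fin 6)≠2) from by decide, show ((1:Fin 6)≠3) from by decide, show ((1:Fin 6)≠4) from by decide, show ((1:Fin 6)≠5) from by decide, show ((5:Fin 6)≠0) from by decide, show ((5:Fin 6)≠1) from by decide, show ((5:Fin 6)≠2) from by decide, show ((5:Fin 6)≠3) from by decide, show ((5:Fin 6)≠4) from by decide]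

lemma hJ03 : (fun y => JG6 (fun z => z 2 + z 1 * z 5) y 0 3) = fun _ => 0 := by
  funext y
  simp only [JG6, Fin.sum_univ_six, pd_G, E6]
  norm_num [show ((3:Fin 6):ℕ)=3 from rfl, show ((4:Fin 6):ℕ)=4 from rfl, show ((5:Fin 6):ℕ)=5 from rfl, show ((2:Fin 6)≠5) from by decide, show ((2:Fin 6)≠4) from by decide, show ((2:Fin 6)≠3) from by decide, show ((2:Fin 6)≠1) from by decide, show ((2:Fin 6)≠0) from by decide, show ((1:Fin 6)≠2) from by decide, show ((1:Fin 6)≠3) from by decide, show ((1:Fin 6)≠4) from by decide, show ((1:Fin 6)≠5) from by decide, show ((5:Fin 6)≠0) from by decide, show ((5:Fin 6)≠1) from by decide, show ((5:Fin 6)≠2) from by decide, show ((5:Fin 6)≠3) from by decide, show ((5:Fin 6)≠4) from by decide]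

open ContinuousLinearMap in
lemma pd_neg1 (μ : Fin 6) (x : Fin 6 → ℝ) :
    pd μ (fun y => -(y 1)) x = -(if (1:Fin 6) = μ then 1 else 0) := by
  have h : HasFDerivAt (fun y : Fin 6 → ℝ => -(y 1))
      (-(proj 1) : (Fin 6 → ℝ) →L[ℝ] ℝ) x :=
    ((proj (R := ℝ) (φ := fun _ : Fin 6 => ℝ) 1).hasFDerivAt).neg
  rw [pd, h.fderiv]
  simp [Pi.single_apply]

lemma pd_zero (μ : Fin 6) (x : Fin 6 → ℝ) : pd μ (fun _ => (0:ℝ)) x = 0 := by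
  rw [pd, fderiv_fun_const]
  simp

/-- Fixing the middle entry of the direct-sum canonical Nambu bracket on `ℝ⁶` does not, in
general, yield a Poisson bracket: there are a smooth `G`, indices `a,c,d`, and a point `x`
at which the Jacobi expression of `𝒥_G` is nonzero. -/
theorem fixed_entry_not_poisson_dim6 :
    ∃ (G : (Fin 6 → ℝ) → ℝ) (a c d : Fin 6) (x : Fin 6 → ℝ),
      ContDiff ℝ (⊤ : ℕ∞) G ∧
      ∑ μ, (JG6 G x a μ * pd μ (fun y => JG6 G y c d) x
          + JG6 G x c μ * pd μ (fun y => JG6 G y d a) x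
          + JG6 G x d μ * pd μ (fun y => JG6 G y a c) x) ≠ 0 := by
  refine ⟨fun z => z 2 + z 1 * z 5, 0, 3, 4, fun _ => 0, ?_, ?_⟩
  · exact ((ContinuousLinearMap.proj (R := ℝ) (φ := fun _ : Fin 6 => ℝ) 2).contDiff).add
      (((ContinuousLinearMap.proj (R := ℝ) (φ := fun _ : Fin 6 => ℝ) 1).contDiff).mul
        ((ContinuousLinearMap.proj (R := ℝ) (φ := fun _ : Fin 6 => ℝ) 5).contDiff))
  · rw [hJ34, hJ40, hJ03]
    simp only [Fin.sum_univ_six, pd_neg1, pd_zero, JG6, pd_G, E6]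
    norm_num [show ((3:Fin 6):ℕ)=3 from rfl, show ((4:Fin 6):ℕ)=4 from rfl, show ((5:Fin 6):ℕ)=5 from rfl, show ((2:Fin 6)≠5) from by decide, show ((2:Fin 6)≠4) from by decide, show ((2:Fin 6)≠3) from by decide, show ((2:Fin 6)≠1) from by decide, show ((2:Fin 6)≠0) from by decide, show ((1:Fin 6)≠2) from by decide, show ((1:Fin 6)≠3) from by decide, show ((1:Fin 6)≠4) from by decide, show ((1:Fin 6)≠5) from by decide, show ((5:Fin 6)≠0) from by decide, show ((5:Fin 6)≠1) from by decide, show ((5:Fin 6)≠2) from by decide, show ((5:Fin 6)≠3) from by decide, show ((5:Fin 6)≠4) from by decide]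
end

section
/- Let Ω ⊆ ℝⁿ be an open set, and let w and 𝔍 be smooth totally antisymmetric third-order tensor fields on Ω (covariant components w_{ijk} and contravariant components 𝔍^{jkℓ}) satisfying the inverse relation Σ_{j<k} w_{ijk} 𝔍^{jkℓ} = δ_i^ℓ on Ω for all i,ℓ. If w satisfies the closure condition ∂w_{ijk}/∂x^ℓ + ∂w_{iℓj}/∂x^k + ∂w_{ikℓ}/∂x^j + ∂w_{jℓk}/∂x^i = 0 on Ω for all i,j,k,ℓ, then for all α,β ∈ {1,…,n} the following necessary condition (the generalized Jacobi identity) holds on Ω: Σ_{i,j,k,ℓ} w_{ijk} ( 𝔍^{βkℓ} ∂_ℓ𝔍^{αij} + 𝔍^{αiℓ} ∂_ℓ𝔍^{βjk} ) = 0. -/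
open Finset

lemma pd_neg {n : ℕ} (l : Fin n) (f : (Fin n → ℝ) → ℝ) (x : Fin n → ℝ) :
    pd l (fun y => -f y) x = -pd l f x := by
  simp [pd, fderiv_neg]

lemma pd_sum {n : ℕ} {ι : Type*} (s : Finset ι) (F : ι → (Fin n → ℝ) → ℝ) (l : Fin n)
    (x : Fin n → ℝ) (h : ∀ i ∈ s, DifferentiableAt ℝ (F i) x) :
    pd l (fun y => ∑ i ∈ s, F i y) x = ∑ i ∈ s, pd l (F i) x := by
  simp [pd, fderiv_fun_sum h]

lemma pd_mul {n : ℕ} (f g : (Fin n → ℝ) → ℝ) (l : Fin n) (x : Fin n → ℝ)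
    (hf : DifferentiableAt ℝ f x) (hg : DifferentiableAt ℝ g x) :
    pd l (fun y => f y * g y) x = pd l f x * g x + f x * pd l g x := by
  simp [pd, fderiv_fun_mul hf hg]; ring

abbrev Q4 (n : ℕ) := Fin n × Fin n × Fin n × Fin n

lemma sum4_prod {n : ℕ} (F : Fin n → Fin n → Fin n → Fin n → ℝ) :
    (∑ i, ∑ j, ∑ k, ∑ l, F i j k l) = ∑ p : Q4 n, F p.1 p.2.1 p.2.2.1 p.2.2.2 := by
  rw [Fintype.sum_prod_type]
  refine Finset.sum_congr rfl fun i _ => ?_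
  rw [Fintype.sum_prod_type]
  refine Finset.sum_congr rfl fun j _ => ?_
  rw [Fintype.sum_prod_type]

lemma sum4_reindex {n : ℕ} (F G : Fin n → Fin n → Fin n → Fin n → ℝ)
    (e ei : Q4 n → Q4 n) (h1 : ∀ p, ei (e p) = p) (h2 : ∀ p, e (ei p) = p)
    (h : ∀ i j k l, F i j k l
      = G (e (i,j,k,l)).1 (e (i,j,k,l)).2.1 (e (i,j,k,l)).2.2.1 (e (i,j,k,l)).2.2.2) :
    (∑ i, ∑ j, ∑ k, ∑ l, F i j k l) = ∑ i, ∑ j, ∑ k, ∑ l, G i j k l := by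
  rw [sum4_prod, sum4_prod]
  have : ∀ p : Q4 n, F p.1 p.2.1 p.2.2.1 p.2.2.2
      = (fun q : Q4 n => G q.1 q.2.1 q.2.2.1 q.2.2.2) (e p) := fun ⟨i,j,k,l⟩ => h i j k l
  rw [Finset.sum_congr rfl fun p _ => this p]
  exact Equiv.sum_comp ⟨e, ei, h1, h2⟩ (fun q : Q4 n => G q.1 q.2.1 q.2.2.1 q.2.2.2)

lemma jacobi_algebra {n : ℕ} (J : Fin n → Fin n → Fin n → ℝ)
    (D : Fin n → Fin n → Fin n → Fin n → ℝ)
    (hJ23 : ∀ a i j, J a i j = - J a j i)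
    (hD12 : ∀ l i j k, D l i j k = - D l j i k)
    (hD23 : ∀ l i j k, D l i j k = - D l i k j)
    (hcl : ∀ i j k l, D l i j k + D k i l j + D j i k l + D i j l k = 0)
    (a b : Fin n) :
    (∑ i, ∑ j, ∑ k, ∑ l, J a i l * J b j k * D l i j k)
      + (∑ i, ∑ j, ∑ k, ∑ l, J b i l * J a j k * D l i j k) = 0 := by
  set UU : Fin n → Fin n → ℝ :=
    fun a b => ∑ i, ∑ j, ∑ k, ∑ l, J a i l * J b j k * D l i j k with hUU
  set AA : Fin n → Fin n → ℝ :=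
    fun a b => ∑ i, ∑ j, ∑ k, ∑ l, J a i j * J b k l * D l i j k with hAA
  have rA : ∀ a b : Fin n,
      (∑ i, ∑ j, ∑ k, ∑ l, J a i l * J b j k * D k i l j) = AA a b := by
    intro a b
    exact sum4_reindex _ _
      (fun p => (p.1, p.2.2.2, p.2.1, p.2.2.1))
      (fun p => (p.1, p.2.2.1, p.2.2.2, p.2.1))
      (fun ⟨_,_,_,_⟩ => rfl) (fun ⟨_,_,_,_⟩ => rfl)
      (fun i j k l => rfl)
  have rB : ∀ a b : Fin n,
      (∑ i, ∑ j, ∑ k, ∑ l, J a i l * J b j k * D j i k l) = AA a b := by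
    intro a b
    exact sum4_reindex _ _
      (fun p => (p.1, p.2.2.2, p.2.2.1, p.2.1))
      (fun p => (p.1, p.2.2.2, p.2.2.1, p.2.1))
      (fun ⟨_,_,_,_⟩ => rfl) (fun ⟨_,_,_,_⟩ => rfl)
      (fun i j k l => by simp only []; rw [hJ23 b k j, hD23 j i l k]; ring)
  have rC : ∀ a b : Fin n,
      (∑ i, ∑ j, ∑ k, ∑ l, J a i l * J b j k * D i j l k) = UU a b := by
    intro a b
    exact sum4_reindex _ _
      (fun p => (p.2.2.2, p.2.1, p.2.2.1, p.1))
      (fun p => (p.2.2.2, p.2.1, p.2.2.1, p.1))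
      (fun ⟨_,_,_,_⟩ => rfl) (fun ⟨_,_,_,_⟩ => rfl)
      (fun i j k l => by simp only []; rw [hJ23 a l i, hD12 i l j k]; ring)
  have key1 : ∀ a b : Fin n, UU a b = -AA a b - AA a b - UU a b := by
    intro a b
    calc UU a b
        = ∑ i, ∑ j, ∑ k, ∑ l, (-(J a i l * J b j k * D k i l j)
            + -(J a i l * J b j k * D j i k l) + -(J a i l * J b j k * D i j l k)) := by
          refine Finset.sum_congr rfl fun i _ => ?_
          refine Finset.sum_congr rfl fun j _ => ?_
          refine Finset.sum_congr rfl fun k _ => ?_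
          refine Finset.sum_congr rfl fun l _ => ?_
          linear_combination (J a i l * J b j k) * hcl i j k l
      _ = -(∑ i, ∑ j, ∑ k, ∑ l, J a i l * J b j k * D k i l j)
            - (∑ i, ∑ j, ∑ k, ∑ l, J a i l * J b j k * D j i k l)
            - (∑ i, ∑ j, ∑ k, ∑ l, J a i l * J b j k * D i j l k) := by
          simp [Finset.sum_add_distrib, Finset.sum_neg_distrib]; ring
      _ = -AA a b - AA a b - UU a b := by rw [rA, rB, rC]
  have rAbar : ∀ a b : Fin n,
      AA b a = ∑ i, ∑ j, ∑ k, ∑ l, J a i j * J b k l * D j i k l := by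
    intro a b
    exact sum4_reindex _ _
      (fun p => (p.2.2.1, p.2.2.2, p.1, p.2.1))
      (fun p => (p.2.2.1, p.2.2.2, p.1, p.2.1))
      (fun ⟨_,_,_,_⟩ => rfl) (fun ⟨_,_,_,_⟩ => rfl)
      (fun i j k l => by simp only []; rw [hD12 l k i j, hD23 l i k j]; ring)
  have rP : ∀ a b : Fin n,
      (∑ i, ∑ j, ∑ k, ∑ l, J a i j * J b k l * D k i l j) = AA a b := by
    intro a b
    exact sum4_reindex _ _
      (fun p => (p.1, p.2.1, p.2.2.2, p.2.2.1))
      (fun p => (p.1, p.2.1, p.2.2.2, p.2.2.1))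
      (fun ⟨_,_,_,_⟩ => rfl) (fun ⟨_,_,_,_⟩ => rfl)
      (fun i j k l => by simp only []; rw [hJ23 b l k, hD23 k i j l]; ring)
  have rQ : ∀ a b : Fin n,
      (∑ i, ∑ j, ∑ k, ∑ l, J a i j * J b k l * D i j l k) = UU a b := by
    intro a b
    exact sum4_reindex _ _
      (fun p => (p.2.1, p.2.2.2, p.2.2.1, p.1))
      (fun p => (p.2.2.2, p.1, p.2.2.1, p.2.1))
      (fun ⟨_,_,_,_⟩ => rfl) (fun ⟨_,_,_,_⟩ => rfl)
      (fun i j k l => by simp only []; rw [hJ23 a j i, hJ23 b l k]; ring)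
  have key2 : ∀ a b : Fin n, AA b a = -AA a b - AA a b - UU a b := by
    intro a b
    calc AA b a
        = ∑ i, ∑ j, ∑ k, ∑ l, J a i j * J b k l * D j i k l := rAbar a b
      _ = ∑ i, ∑ j, ∑ k, ∑ l, (-(J a i j * J b k l * D l i j k)
            + -(J a i j * J b k l * D k i l j) + -(J a i j * J b k l * D i j l k)) := by
          refine Finset.sum_congr rfl fun i _ => ?_
          refine Finset.sum_congr rfl fun j _ => ?_
          refine Finset.sum_congr rfl fun k _ => ?_
          refine Finset.sum_congr rfl fun l _ => ?_
          linear_combination (J a i j * J b k l) * hcl i j k l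
      _ = -(∑ i, ∑ j, ∑ k, ∑ l, J a i j * J b k l * D l i j k)
            - (∑ i, ∑ j, ∑ k, ∑ l, J a i j * J b k l * D k i l j)
            - (∑ i, ∑ j, ∑ k, ∑ l, J a i j * J b k l * D i j l k) := by
          simp [Finset.sum_add_distrib, Finset.sum_neg_distrib]; ring
      _ = -AA a b - AA a b - UU a b := by rw [rP, rQ]
  have h1 := key1 a b
  have h2 := key2 a b
  have h3 := key1 b a
  have h4 := key2 b a
  show UU a b + UU b a = 0
  linarith

/-- If the smooth totally antisymmetric third-order tensor fields `w` (covariant) and `Jt`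
(contravariant) are inverse to each other, `Σ_{j<k} w_{ijk} 𝔍^{jkℓ} = δ_iℓ`, and `w` is
closed, then the generalized Jacobi identity
`Σ_{i,j,k,ℓ} w_{ijk} (𝔍^{βkℓ} ∂_ℓ𝔍^{αij} + 𝔍^{αiℓ} ∂_ℓ𝔍^{βjk}) = 0` holds on `Ω`. -/
theorem closure_implies_generalized_jacobi {n : ℕ}
    (Ω : Set (Fin n → ℝ)) (hΩ : IsOpen Ω)
    (w Jt : (Fin n → ℝ) → Fin n → Fin n → Fin n → ℝ)
    (hwsmooth : ∀ i j k, ContDiffOn ℝ (⊤ : ℕ∞) (fun x => w x i j k) Ω)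
    (hJsmooth : ∀ i j k, ContDiffOn ℝ (⊤ : ℕ∞) (fun x => Jt x i j k) Ω)
    (hwskew12 : ∀ x, ∀ i j k, w x i j k = - w x j i k)
    (hwskew23 : ∀ x, ∀ i j k, w x i j k = - w x i k j)
    (hJskew12 : ∀ x, ∀ i j k, Jt x i j k = - Jt x j i k)
    (hJskew23 : ∀ x, ∀ i j k, Jt x i j k = - Jt x i k j)
    (hinv : ∀ x ∈ Ω, ∀ i l,
      (∑ j, ∑ k, if j < k then w x i j k * Jt x j k l else 0)
        = if i = l then (1 : ℝ) else 0)
    (hclosed : ∀ x ∈ Ω, ∀ i j k l,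
      pd l (fun y => w y i j k) x + pd k (fun y => w y i l j) x
        + pd j (fun y => w y i k l) x + pd i (fun y => w y j l k) x = 0) :
    ∀ x ∈ Ω, ∀ α β : Fin n,
      ∑ i, ∑ j, ∑ k, ∑ l, w x i j k *
        (Jt x β k l * pd l (fun y => Jt y α i j) x
          + Jt x α i l * pd l (fun y => Jt y β j k) x) = 0 := by
  -- full-sum version of the inverse relation
  have hinv2 : ∀ x ∈ Ω, ∀ i m,
      (∑ j, ∑ k, w x i j k * Jt x j k m) = if i = m then (2:ℝ) else 0 := by
    intro x hx i m
    have hsymm : ∀ j k : Fin n, w x i k j * Jt x k j m = w x i j k * Jt x j k m := by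
      intro j k
      rw [hwskew23 x i k j, hJskew12 x k j m]; ring
    have hdiag : ∀ j : Fin n, w x i j j * Jt x j j m = 0 := by
      intro j
      have := hwskew23 x i j j
      have hz : w x i j j = 0 := by linarith
      rw [hz]; ring
    have split : ∀ j k : Fin n, w x i j k * Jt x j k m
        = (if j < k then w x i j k * Jt x j k m else 0)
          + (if k < j then w x i j k * Jt x j k m else 0) := by
      intro j k
      rcases lt_trichotomy j k with h | h | h
      · simp [h, asymm h]
      · subst h; simp [hdiag j]
      · simp [h, asymm h]
    calc (∑ j, ∑ k, w x i j k * Jt x j k m)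
        = (∑ j, ∑ k, ((if j < k then w x i j k * Jt x j k m else 0)
            + (if k < j then w x i j k * Jt x j k m else 0))) := by
          exact Finset.sum_congr rfl fun j _ => Finset.sum_congr rfl fun k _ => split j k
      _ = (∑ j, ∑ k, if j < k then w x i j k * Jt x j k m else 0)
            + (∑ j, ∑ k, if k < j then w x i j k * Jt x j k m else 0) := by
          simp [Finset.sum_add_distrib]
      _ = (∑ j, ∑ k, if j < k then w x i j k * Jt x j k m else 0)
            + (∑ j, ∑ k, if j < k then w x i j k * Jt x j k m else 0) := by
          congr 1
          rw [Finset.sum_comm]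
          refine Finset.sum_congr rfl fun j _ => Finset.sum_congr rfl fun k _ => ?_
          by_cases h : j < k <;> simp [h, hsymm j k]
      _ = if i = m then (2:ℝ) else 0 := by
          rw [hinv x hx i m]
          by_cases h : i = m <;> simp [h] <;> ring
  intro x hx α β
  have hdw : ∀ i j k, DifferentiableAt ℝ (fun y => w y i j k) x := fun i j k =>
    ((hwsmooth i j k).contDiffAt (hΩ.mem_nhds hx)).differentiableAt (by simp)
  have hdJ : ∀ i j k, DifferentiableAt ℝ (fun y => Jt y i j k) x := fun i j k =>
    ((hJsmooth i j k).contDiffAt (hΩ.mem_nhds hx)).differentiableAt (by simp)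
  -- contraction identity from differentiating the inverse relation
  have hkey : ∀ i m l, (∑ j, ∑ k, w x i j k * pd l (fun y => Jt y j k m) x)
      = -(∑ j, ∑ k, pd l (fun y => w y i j k) x * Jt x j k m) := by
    intro i m l
    have hzero : pd l (fun y => ∑ j, ∑ k, w y i j k * Jt y j k m) x = 0 := by
      have hev : (fun y => ∑ j, ∑ k, w y i j k * Jt y j k m)
          =ᶠ[nhds x] (fun _ => if i = m then (2:ℝ) else 0) :=
        Filter.eventuallyEq_of_mem (hΩ.mem_nhds hx) (fun y hy => hinv2 y hy i m)
      unfold pd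
      rw [hev.fderiv_eq, fderiv_fun_const]
      simp
    have hexp : pd l (fun y => ∑ j, ∑ k, w y i j k * Jt y j k m) x
        = ∑ j, ∑ k, (pd l (fun y => w y i j k) x * Jt x j k m
            + w x i j k * pd l (fun y => Jt y j k m) x) := by
      rw [pd_sum univ (fun j y => ∑ k, w y i j k * Jt y j k m) l x
        (fun j _ => DifferentiableAt.fun_sum fun k _ => ((hdw i j k).mul (hdJ j k m)))]
      refine Finset.sum_congr rfl fun j _ => ?_
      rw [pd_sum univ (fun k y => w y i j k * Jt y j k m) l x
        (fun k _ => ((hdw i j k).mul (hdJ j k m)))]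
      refine Finset.sum_congr rfl fun k _ => ?_
      exact pd_mul _ _ l x (hdw i j k) (hdJ j k m)
    rw [hexp] at hzero
    rw [Finset.sum_congr rfl (fun j _ => Finset.sum_add_distrib)] at hzero
    rw [Finset.sum_add_distrib] at hzero
    linarith
  -- cyclic identities for values and derivatives
  have hJcyc : ∀ a i j : Fin n, ∀ y, Jt y a i j = Jt y i j a := by
    intro a i j y
    rw [hJskew12 y a i j, hJskew23 y i a j]; ring
  have hpdJcyc : ∀ (l a i j : Fin n), pd l (fun y => Jt y a i j) x
      = pd l (fun y => Jt y i j a) x := by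
    intro l a i j
    congr 1
    exact funext fun y => hJcyc a i j y
  have hwcyc : ∀ i j k : Fin n, w x k i j = w x i j k := by
    intro i j k
    rw [hwskew12 x k i j, hwskew23 x i k j]; ring
  -- the D tensor and its properties
  set D : Fin n → Fin n → Fin n → Fin n → ℝ :=
    fun l i j k => pd l (fun y => w y i j k) x with hD
  have hD12 : ∀ l i j k, D l i j k = - D l j i k := by
    intro l i j k
    rw [hD]
    simp only []
    rw [show (fun y => w y i j k) = (fun y => -(w y j i k)) from
      funext fun y => hwskew12 y i j k]
    exact pd_neg l _ x
  have hD23 : ∀ l i j k, D l i j k = - D l i k j := by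
    intro l i j k
    rw [hD]
    simp only []
    rw [show (fun y => w y i j k) = (fun y => -(w y i k j)) from
      funext fun y => hwskew23 y i j k]
    exact pd_neg l _ x
  -- contraction of the double sums : the M-form
  have hM : ∀ a b : Fin n,
      (∑ i, ∑ j, ∑ k, ∑ l, Jt x a i j * (w x i k l * pd j (fun y => Jt y k l b) x))
        = -(∑ i, ∑ j, ∑ k, ∑ l, Jt x a i l * Jt x b j k * D l i j k) := by
    intro a b
    have inner : ∀ i j : Fin n,
        (∑ k, ∑ l, Jt x a i j * (w x i k l * pd j (fun y => Jt y k l b) x))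
          = ∑ k, ∑ l, -(Jt x a i j * (pd j (fun y => w y i k l) x * Jt x k l b)) := by
      intro i j
      calc (∑ k, ∑ l, Jt x a i j * (w x i k l * pd j (fun y => Jt y k l b) x))
          = Jt x a i j * ∑ k, ∑ l, w x i k l * pd j (fun y => Jt y k l b) x := by
            rw [Finset.mul_sum]
            exact Finset.sum_congr rfl fun k _ => by rw [Finset.mul_sum]
        _ = Jt x a i j * -(∑ k, ∑ l, pd j (fun y => w y i k l) x * Jt x k l b) := by
            rw [hkey i b j]
        _ = ∑ k, ∑ l, -(Jt x a i j * (pd j (fun y => w y i k l) x * Jt x k l b)) := by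
            rw [mul_neg, Finset.mul_sum, ← Finset.sum_neg_distrib]
            exact Finset.sum_congr rfl fun k _ => by
              rw [Finset.mul_sum, ← Finset.sum_neg_distrib]
    calc (∑ i, ∑ j, ∑ k, ∑ l, Jt x a i j * (w x i k l * pd j (fun y => Jt y k l b) x))
        = ∑ i, ∑ j, ∑ k, ∑ l, -(Jt x a i j * (pd j (fun y => w y i k l) x * Jt x k l b)) := by
          exact Finset.sum_congr rfl fun i _ => Finset.sum_congr rfl fun j _ => inner i j
      _ = -(∑ i, ∑ j, ∑ k, ∑ l, Jt x a i j * (pd j (fun y => w y i k l) x * Jt x k l b)) := by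
          simp [Finset.sum_neg_distrib]
      _ = -(∑ i, ∑ j, ∑ k, ∑ l, Jt x a i l * Jt x b j k * D l i j k) := by
          congr 1
          refine sum4_reindex _ _
            (fun p => (p.1, p.2.2.1, p.2.2.2, p.2.1))
            (fun p => (p.1, p.2.2.2, p.2.1, p.2.2.1))
            (fun ⟨_,_,_,_⟩ => rfl) (fun ⟨_,_,_,_⟩ => rfl)
            (fun i j k l => ?_)
          simp only [hD]
          rw [← hJcyc b k l x]
          ring
  -- identify the two halves of the goal with the M-form
  have hT2 : (∑ i, ∑ j, ∑ k, ∑ l, w x i j k * (Jt x α i l * pd l (fun y => Jt y β j k) x))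
      = ∑ i, ∑ j, ∑ k, ∑ l, Jt x α i j * (w x i k l * pd j (fun y => Jt y k l β) x) := by
    refine sum4_reindex _ _
      (fun p => (p.1, p.2.2.2, p.2.1, p.2.2.1))
      (fun p => (p.1, p.2.2.1, p.2.2.2, p.2.1))
      (fun ⟨_,_,_,_⟩ => rfl) (fun ⟨_,_,_,_⟩ => rfl)
      (fun i j k l => ?_)
    simp only []
    rw [hpdJcyc l β j k]
    ring
  have hT1 : (∑ i, ∑ j, ∑ k, ∑ l, w x i j k * (Jt x β k l * pd l (fun y => Jt y α i j) x))
      = ∑ i, ∑ j, ∑ k, ∑ l, Jt x β i j * (w x i k l * pd j (fun y => Jt y k l α) x) := by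
    refine sum4_reindex _ _
      (fun p => (p.2.2.1, p.2.2.2, p.1, p.2.1))
      (fun p => (p.2.2.1, p.2.2.2, p.1, p.2.1))
      (fun ⟨_,_,_,_⟩ => rfl) (fun ⟨_,_,_,_⟩ => rfl)
      (fun i j k l => ?_)
    simp only []
    rw [hpdJcyc l α i j, ← hwcyc i j k]
    ring
  have halg := jacobi_algebra (Jt x) D
    (fun a i j => hJskew23 x a i j)
    hD12 hD23
    (fun i j k l => hclosed x hx i j k l)
    α β
  calc (∑ i, ∑ j, ∑ k, ∑ l, w x i j k *
        (Jt x β k l * pd l (fun y => Jt y α i j) x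
          + Jt x α i l * pd l (fun y => Jt y β j k) x))
      = (∑ i, ∑ j, ∑ k, ∑ l, w x i j k * (Jt x β k l * pd l (fun y => Jt y α i j) x))
        + (∑ i, ∑ j, ∑ k, ∑ l, w x i j k * (Jt x α i l * pd l (fun y => Jt y β j k) x)) := by
        simp [mul_add, Finset.sum_add_distrib]
    _ = -(∑ i, ∑ j, ∑ k, ∑ l, Jt x β i l * Jt x α j k * D l i j k)
        + -(∑ i, ∑ j, ∑ k, ∑ l, Jt x α i l * Jt x β j k * D l i j k) := by
        rw [hT1, hT2, hM β α, hM α β]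
    _ = 0 := by linarith
end
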